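/- Let η be a Schwartz function on ℝ satisfying 4 ∫_ℝ |η(y)| y² dy < |∫_ℝ η(y) dy|. For 0 < ν < 1 define f_ν(y) = η(y/ν) e^{2iy/ν²}. Then there exists a constant C₀ > 0 (depending only on η) such that for every ν ∈ (0,1) and every x ∈ (1/4, 1), sup_{0<t<1} |e^{itΔ}f_ν(x)| ≥ C₀. -/

import Mathlib

open MeasureTheory Real ENNReal

noncomputable section

/-- Fourier transform on ℝ: `f̂(ξ) = ∫ e^{-i x ξ} f(x) dx`. -/
def FT1 (f : ℝ → ℂ) (ξ : ℝ) : ℂ :=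
  ∫ x : ℝ, Complex.exp (-(Complex.I * ((x * ξ : ℝ) : ℂ))) * f x

/-- Inverse Fourier transform on ℝ. -/
def invFT1 (g : ℝ → ℂ) (x : ℝ) : ℂ :=
  ((2 * Real.pi : ℝ) : ℂ)⁻¹ * ∫ ξ : ℝ, Complex.exp (Complex.I * ((x * ξ : ℝ) : ℂ)) * g ξ

/-- Free Schrödinger evolution on ℝ. -/
def schrod1 (f : ℝ → ℂ) (t x : ℝ) : ℂ :=
  ((2 * Real.pi : ℝ) : ℂ)⁻¹ *
    ∫ ξ : ℝ, Complex.exp (Complex.I * ((x * ξ - t * ξ ^ 2 : ℝ) : ℂ)) * FT1 f ξ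

/-- Bessel potential norm `‖f‖_{L_s^p}` on ℝ. -/
def besselNorm1 (s p : ℝ) (f : ℝ → ℂ) : ℝ≥0∞ :=
  eLpNorm (invFT1 fun ξ : ℝ => (((1 + ξ ^ 2) ^ (s / 2) : ℝ) : ℂ) * FT1 f ξ)
    (ENNReal.ofReal p) volume

/-- The maximal function `x ↦ sup_{0<t<1} |e^{itΔ}f(x)|` on ℝ. -/
def maxFn1 (f : ℝ → ℂ) (x : ℝ) : ℝ :=
  ⨆ t : Set.Ioo (0 : ℝ) 1, ‖schrod1 f t.1 x‖

/-- `L^p` norm of the maximal function on the unit ball `(-1,1)`. -/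
def maxNorm1 (p : ℝ) (f : ℝ → ℂ) : ℝ≥0∞ :=
  eLpNorm (maxFn1 f) (ENNReal.ofReal p) (volume.restrict (Metric.ball (0 : ℝ) 1))

/-- Weak `L^{q,∞}` norm over the unit ball `(-1,1)`. -/
def weakNorm1 (q : ℝ) (g : ℝ → ℝ) : ℝ≥0∞ :=
  ⨆ α : {a : ℝ // 0 < a}, ENNReal.ofReal α.1 *
    volume {x : ℝ | x ∈ Metric.ball (0 : ℝ) 1 ∧ α.1 < |g x|} ^ (1 / q)

/-! The modulated dilation `f_ν` is a Galilean boost of a rescaled `η`, so at the focusing time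
`t = ν²x/4` the modulus of `e^{itΔ}f_ν(x)` equals that of `e^{isΔ}η(0)` with `s = x/4`.
Continuing the Gaussian Fourier integral from `Re b > 0` to the imaginary axis gives
`|e^{isΔ}η(0)| = (4πs)^{-1/2} |∫ e^{iy²/(4s)} η(y) dy|`, and `|e^{iθ} - 1| ≤ |θ|` bounds the last
integral below by `|∫ η| - (4s)⁻¹ ∫ |η(y)| y² dy`. -/

open Complex (I)
open FourierTransform Filter Topology SchwartzMap

lemma norm_cexp_neg_mul_sq_le_one {c : ℂ} (hc : 0 ≤ c.re) (u : ℝ) :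
    ‖Complex.exp (-c * u ^ 2)‖ ≤ 1 := by
  rw [norm_cexp_neg_mul_sq, Real.exp_le_one_iff]
  nlinarith [sq_nonneg u]

lemma Complex.inv_re_nonneg {z : ℂ} (hz : 0 ≤ z.re) : 0 ≤ z⁻¹.re := by
  rw [Complex.inv_re]
  exact div_nonneg hz (Complex.normSq_nonneg z)

lemma Complex.mem_slitPlane_of_re_nonneg {z : ℂ} (hz : 0 ≤ z.re) (hz0 : z ≠ 0) :
    z ∈ Complex.slitPlane := by
  rw [Complex.mem_slitPlane_iff]
  rcases hz.lt_or_eq with hpos | hzero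
  · exact Or.inl hpos
  · exact Or.inr fun him => hz0 (Complex.ext hzero.symm him)

lemma tendsto_integral_mul_of_norm_le_one {ι : Type*} {l : Filter ι} [l.IsCountablyGenerated]
    {g : ι → ℝ → ℂ} {g₀ h : ℝ → ℂ} (hh : Integrable h)
    (hg_cont : ∀ᶠ i in l, Continuous (g i)) (hg_le : ∀ᶠ i in l, ∀ u, ‖g i u‖ ≤ 1)
    (hg_lim : ∀ u, Tendsto (fun i => g i u) l (𝓝 (g₀ u))) :
    Tendsto (fun i => ∫ u, g i u * h u) l (𝓝 (∫ u, g₀ u * h u)) := by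
  refine tendsto_integral_filter_of_dominated_convergence (fun u => ‖h u‖) ?_ ?_ hh.norm
    (Eventually.of_forall fun u => (hg_lim u).mul_const _)
  · filter_upwards [hg_cont] with i hi using hi.aestronglyMeasurable.mul hh.aestronglyMeasurable
  · filter_upwards [hg_le] with i hi
    refine Eventually.of_forall fun u => ?_
    rw [norm_mul]
    exact mul_le_of_le_one_left (norm_nonneg _) (hi u)

lemma norm_integral_cexp_mul_sub_integral_le {f : ℝ → ℂ} (hf : Integrable f)
    (hf2 : Integrable fun y => ‖f y‖ * y ^ 2) (r : ℝ) :
    ‖(∫ y : ℝ, Complex.exp (I * ((r * y ^ 2 : ℝ) : ℂ)) * f y) - ∫ y : ℝ, f y‖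
      ≤ |r| * ∫ y : ℝ, ‖f y‖ * y ^ 2 := by
  have hbdd : Integrable fun y : ℝ => Complex.exp (I * ((r * y ^ 2 : ℝ) : ℂ)) * f y :=
    hf.bdd_mul (c := 1) (by fun_prop) (Eventually.of_forall fun y => by
      rw [mul_comm I, Complex.norm_exp_ofReal_mul_I])
  rw [← integral_sub hbdd hf, ← integral_const_mul]
  refine norm_integral_le_of_norm_le (hf2.const_mul _) (Eventually.of_forall fun y => ?_)
  calc ‖Complex.exp (I * ((r * y ^ 2 : ℝ) : ℂ)) * f y - f y‖
      = ‖Complex.exp (I * ((r * y ^ 2 : ℝ) : ℂ)) - 1‖ * ‖f y‖ := by rw [← norm_mul, sub_one_mul]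
    _ ≤ ‖r * y ^ 2‖ * ‖f y‖ := by gcongr; exact Real.norm_exp_I_mul_ofReal_sub_one_le
    _ = |r| * (‖f y‖ * y ^ 2) := by rw [Real.norm_eq_abs, abs_mul, abs_sq]; ring

lemma FT1_eq_fourier (f : ℝ → ℂ) : FT1 f = fun ξ => 𝓕 f (ξ / (2 * π)) := by
  ext ξ
  rw [Real.fourier_real_eq_integral_exp_smul, FT1]
  congr 1 with v
  rw [smul_eq_mul]
  congr 2
  push_cast
  field_simp

lemma SchwartzMap.continuous_FT1 (η : 𝓢(ℝ, ℂ)) : Continuous (FT1 η) := by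
  rw [FT1_eq_fourier, ← SchwartzMap.fourier_coe]
  fun_prop

lemma SchwartzMap.integrable_FT1 (η : 𝓢(ℝ, ℂ)) : Integrable (FT1 η) := by
  rw [FT1_eq_fourier, ← SchwartzMap.fourier_coe]
  exact (𝓕 η).integrable.comp_div (by positivity)

lemma FT1_dilate_mul_exp (f : ℝ → ℂ) {ν : ℝ} (hν : 0 < ν) (a ξ : ℝ) :
    FT1 (fun y => f (y / ν) * Complex.exp (I * ((a * y : ℝ) : ℂ))) ξ = ν * FT1 f (ν * (ξ - a)) := by
  have h := Measure.integral_comp_div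
    (fun z : ℝ => Complex.exp (-(I * ((z * (ν * (ξ - a)) : ℝ) : ℂ))) * f z) ν
  rw [abs_of_pos hν, Complex.real_smul] at h
  rw [FT1, FT1, ← h]
  congr 1 with y
  have hphase : y / ν * (ν * (ξ - a)) = y * ξ - a * y := by field_simp
  rw [hphase, Complex.ofReal_sub, mul_sub, neg_sub', sub_eq_add_neg, Complex.exp_add, neg_neg]
  ring

lemma integral_cexp_neg_mul_sq_mul_FT1 (η : 𝓢(ℝ, ℂ)) {b : ℂ} (hb : 0 < b.re) :
    ∫ u : ℝ, Complex.exp (-b * u ^ 2) * FT1 η u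
      = (π / b) ^ (1 / 2 : ℂ) * ∫ y : ℝ, Complex.exp (-(4 * b)⁻¹ * y ^ 2) * η y := by
  set F : ℝ × ℝ → ℂ := fun p =>
    Complex.exp (-b * p.1 ^ 2) * (Complex.exp (-(I * ((p.2 * p.1 : ℝ) : ℂ))) * η p.2)
  have hF : Integrable F (volume.prod volume) := by
    refine ((integrable_exp_neg_mul_sq hb).mul_prod η.integrable.norm).mono'
      (by fun_prop : Continuous F).aestronglyMeasurable (Eventually.of_forall fun p => ?_)
    rw [norm_mul, norm_mul, norm_cexp_neg_mul_sq, mul_comm I, ← neg_mul, ← Complex.ofReal_neg,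
      Complex.norm_exp_ofReal_mul_I, one_mul]
  calc ∫ u : ℝ, Complex.exp (-b * u ^ 2) * FT1 η u
      = ∫ u : ℝ, ∫ y : ℝ, F (u, y) := by simp_rw [F, FT1, integral_const_mul]
    _ = ∫ y : ℝ, ∫ u : ℝ, F (u, y) := integral_integral_swap hF
    _ = ∫ y : ℝ, η y * ((π / b) ^ (1 / 2 : ℂ) * Complex.exp (-(4 * b)⁻¹ * y ^ 2)) := by
      congr 1 with y
      rw [show -(4 * b)⁻¹ * (y : ℂ) ^ 2 = -(-(y : ℂ)) ^ 2 / (4 * b) by ring,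
        ← fourierIntegral_gaussian hb (-y), ← integral_const_mul]
      congr 1 with u
      simp only [F]
      push_cast
      ring_nf
    _ = _ := by rw [← integral_const_mul]; congr 1 with y; ring

lemma integral_cexp_neg_mul_sq_mul_FT1_of_re_nonneg (η : 𝓢(ℝ, ℂ)) {b : ℂ} (hb : 0 ≤ b.re)
    (hb0 : b ≠ 0) :
    ∫ u : ℝ, Complex.exp (-b * u ^ 2) * FT1 η u
      = (π / b) ^ (1 / 2 : ℂ) * ∫ y : ℝ, Complex.exp (-(4 * b)⁻¹ * y ^ 2) * η y := by
  have hlim : Tendsto (fun ε : ℝ => b + ε) (𝓝[>] 0) (𝓝 b) := by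
    simpa using (tendsto_const_nhds (x := b)).add
      (Complex.continuous_ofReal.tendsto' 0 0 Complex.ofReal_zero |>.mono_left nhdsWithin_le_nhds)
  have hre : ∀ᶠ ε : ℝ in 𝓝[>] 0, 0 < (b + ε).re :=
    eventually_nhdsWithin_of_forall fun ε (hε : 0 < ε) => by simp; linarith
  have hL := tendsto_integral_mul_of_norm_le_one η.integrable_FT1
    (Eventually.of_forall fun _ => by fun_prop)
    (hre.mono fun ε hε u => norm_cexp_neg_mul_sq_le_one hε.le u)
    (fun u => ((hlim.neg.mul_const _).cexp))
  have hR : Tendsto (fun ε : ℝ => (π / (b + ε)) ^ (1 / 2 : ℂ) *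
        ∫ y : ℝ, Complex.exp (-(4 * (b + ε))⁻¹ * y ^ 2) * η y) (𝓝[>] 0)
      (𝓝 ((π / b) ^ (1 / 2 : ℂ) * ∫ y : ℝ, Complex.exp (-(4 * b)⁻¹ * y ^ 2) * η y)) := by
    have hπb : π / b ∈ Complex.slitPlane := by
      refine Complex.mem_slitPlane_of_re_nonneg ?_ (div_ne_zero (by exact_mod_cast pi_ne_zero) hb0)
      rw [div_eq_mul_inv, Complex.re_ofReal_mul]
      exact mul_nonneg pi_pos.le (Complex.inv_re_nonneg hb)
    refine ((continuousAt_cpow_const hπb).tendsto.comp (tendsto_const_nhds.div hlim hb0)).mul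
      (tendsto_integral_mul_of_norm_le_one η.integrable
        (Eventually.of_forall fun _ => (continuous_const.mul (by fun_prop)).cexp)
        (hre.mono fun ε hε u => norm_cexp_neg_mul_sq_le_one ?_ u)
        (fun u => (((tendsto_const_nhds.mul hlim).inv₀ ?_).neg.mul_const _).cexp))
    · exact Complex.inv_re_nonneg (by simp at hε ⊢; linarith)
    · simpa using hb0
  exact tendsto_nhds_unique (hL.congr' (hre.mono fun ε hε =>
    integral_cexp_neg_mul_sq_mul_FT1 η hε)) hR

lemma norm_schrod1_le (f : ℝ → ℂ) (t x : ℝ) :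
    ‖schrod1 f t x‖ ≤ (2 * π)⁻¹ * ∫ ξ : ℝ, ‖FT1 f ξ‖ := by
  rw [schrod1, norm_mul, norm_inv, Complex.norm_real, Real.norm_of_nonneg (by positivity)]
  gcongr
  refine (norm_integral_le_integral_norm _).trans_eq (congr_arg _ (funext fun ξ => ?_))
  rw [norm_mul, mul_comm I, Complex.norm_exp_ofReal_mul_I, one_mul]

lemma norm_schrod1_le_maxFn1 (f : ℝ → ℂ) {t : ℝ} (ht : t ∈ Set.Ioo (0 : ℝ) 1) (x : ℝ) :
    ‖schrod1 f t x‖ ≤ maxFn1 f x :=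
  le_ciSup (f := fun t : Set.Ioo (0 : ℝ) 1 => ‖schrod1 f t.1 x‖)
    ⟨_, Set.forall_mem_range.2 fun t => norm_schrod1_le f t.1 x⟩ ⟨t, ht⟩

lemma schrod1_dilate_mul_exp (f : ℝ → ℂ) {ν : ℝ} (hν : 0 < ν) (a t x : ℝ) :
    schrod1 (fun y => f (y / ν) * Complex.exp (I * ((a * y : ℝ) : ℂ))) t x
      = Complex.exp (I * ((x * a - t * a ^ 2 : ℝ) : ℂ)) *
        schrod1 f (t / ν ^ 2) ((x - 2 * t * a) / ν) := by
  set F : ℝ → ℂ := fun ξ =>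
    Complex.exp (I * ((x * ξ - t * ξ ^ 2 : ℝ) : ℂ)) * (ν * FT1 f (ν * (ξ - a)))
  have hshift : ∫ ξ, F ξ = (ν : ℂ)⁻¹ * ∫ w, F (a + w / ν) := by
    rw [Measure.integral_comp_div (fun ξ => F (a + ξ)) ν, integral_add_left_eq_self,
      abs_of_pos hν, Complex.real_smul, ← mul_assoc, inv_mul_cancel₀ (by exact_mod_cast hν.ne'),
      one_mul]
  have hF : ∀ w, F (a + w / ν) = ν * Complex.exp (I * ((x * a - t * a ^ 2 : ℝ) : ℂ)) *
      (Complex.exp (I * (((x - 2 * t * a) / ν * w - t / ν ^ 2 * w ^ 2 : ℝ) : ℂ)) * FT1 f w) := by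
    intro w
    have hphase : x * (a + w / ν) - t * (a + w / ν) ^ 2
        = (x * a - t * a ^ 2) + ((x - 2 * t * a) / ν * w - t / ν ^ 2 * w ^ 2) := by
      field_simp; ring
    simp only [F, add_sub_cancel_left, mul_div_cancel₀ _ hν.ne']
    rw [hphase, Complex.ofReal_add, mul_add, Complex.exp_add]
    ring
  simp only [schrod1, FT1_dilate_mul_exp f hν]
  rw [hshift]
  simp only [hF, integral_const_mul]
  have hν' : (ν : ℂ) ≠ 0 := by exact_mod_cast hν.ne'
  field_simp

-- At time `ν²x/4` the packet boosted to frequency `2/ν²` has its centre at `x`.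
lemma norm_schrod1_dilate_mul_exp_at_focus (f : ℝ → ℂ) {ν : ℝ} (hν : 0 < ν) (x : ℝ) :
    ‖schrod1 (fun y => f (y / ν) * Complex.exp (I * ((2 * y / ν ^ 2 : ℝ) : ℂ))) (ν ^ 2 * x / 4) x‖
      = ‖schrod1 f (x / 4) 0‖ := by
  have hphase : (fun y : ℝ => f (y / ν) * Complex.exp (I * ((2 * y / ν ^ 2 : ℝ) : ℂ)))
      = fun y => f (y / ν) * Complex.exp (I * ((2 / ν ^ 2 * y : ℝ) : ℂ)) := by
    ext y; ring_nf
  rw [hphase, schrod1_dilate_mul_exp f hν, norm_mul, mul_comm I, Complex.norm_exp_ofReal_mul_I,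
    one_mul, show ν ^ 2 * x / 4 / ν ^ 2 = x / 4 by field_simp,
    show x - 2 * (ν ^ 2 * x / 4) * (2 / ν ^ 2) = 0 by field_simp; ring, zero_div]

lemma schrod1_apply_zero (f : ℝ → ℂ) (s : ℝ) :
    schrod1 f s 0 = ((2 * π : ℝ) : ℂ)⁻¹ * ∫ u : ℝ, Complex.exp (-(s * I) * u ^ 2) * FT1 f u := by
  rw [schrod1]
  congr 2 with u
  push_cast
  ring_nf

lemma norm_schrod1_apply_zero (η : 𝓢(ℝ, ℂ)) {s : ℝ} (hs : 0 < s) :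
    ‖schrod1 η s 0‖
      = ‖∫ y : ℝ, Complex.exp (I * (((4 * s)⁻¹ * y ^ 2 : ℝ) : ℂ)) * η y‖ / √(4 * π * s) := by
  have hsI : (s * I : ℂ) ≠ 0 := mul_ne_zero (by exact_mod_cast hs.ne') Complex.I_ne_zero
  have hphase : ∀ y : ℝ, -(4 * (s * I))⁻¹ * (y : ℂ) ^ 2 = I * (((4 * s)⁻¹ * y ^ 2 : ℝ) : ℂ) := by
    intro y
    push_cast
    field_simp
    rw [Complex.I_sq]
    ring
  have hsqrt : ‖(π / (s * I) : ℂ) ^ (1 / 2 : ℂ)‖ = √(π / s) := by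
    rw [show (1 / 2 : ℂ) = ((1 / 2 : ℝ) : ℂ) by push_cast; rfl, Complex.norm_cpow_real,
      Real.sqrt_eq_rpow, norm_div, norm_mul, Complex.norm_I, mul_one, Complex.norm_real,
      Complex.norm_real, Real.norm_of_nonneg pi_pos.le, Real.norm_of_nonneg hs.le]
  have hprod : √(4 * π * s) * √(π / s) = 2 * π := by
    rw [← Real.sqrt_mul (by positivity), show 4 * π * s * (π / s) = (2 * π) ^ 2 by field_simp; ring,
      Real.sqrt_sq (by positivity)]
  rw [schrod1_apply_zero, integral_cexp_neg_mul_sq_mul_FT1_of_re_nonneg η (by simp) hsI]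
  simp only [hphase]
  rw [norm_mul, norm_mul, hsqrt, norm_inv, Complex.norm_real, Real.norm_of_nonneg (by positivity),
    ← hprod]
  have : 0 < √(4 * π * s) := by positivity
  have : 0 < √(π / s) := by positivity
  field_simp

lemma norm_schrod1_apply_zero_ge (η : 𝓢(ℝ, ℂ)) {s : ℝ} (hs : 0 < s) :
    (‖∫ y : ℝ, η y‖ - (4 * s)⁻¹ * ∫ y : ℝ, ‖η y‖ * y ^ 2) / √(4 * π * s) ≤ ‖schrod1 η s 0‖ := by
  have hη2 : Integrable fun y : ℝ => ‖η y‖ * y ^ 2 := by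
    refine (η.integrable_pow_mul volume 2).congr (Eventually.of_forall fun y => ?_)
    simp only [Real.norm_eq_abs, sq_abs, mul_comm]
  have h := norm_integral_cexp_mul_sub_integral_le η.integrable hη2 (4 * s)⁻¹
  rw [abs_of_pos (by positivity)] at h
  rw [norm_schrod1_apply_zero η hs]
  gcongr
  linarith [norm_sub_norm_le (∫ y : ℝ, η y)
    (∫ y : ℝ, Complex.exp (I * (((4 * s)⁻¹ * y ^ 2 : ℝ) : ℂ)) * η y), norm_sub_rev
    (∫ y : ℝ, η y) (∫ y : ℝ, Complex.exp (I * (((4 * s)⁻¹ * y ^ 2 : ℝ) : ℂ)) * η y)]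

/-- If `4 ∫ |η(y)| y² dy < |∫ η|` then the maximal Schrödinger function of
`f_ν(y) = η(y/ν)e^{2iy/ν²}` is bounded below on `(1/4, 1)` uniformly in `0 < ν < 1`. -/
theorem stmt16 (η : SchwartzMap ℝ ℂ)
    (hη : 4 * ∫ y : ℝ, ‖η y‖ * y ^ 2 < ‖∫ y : ℝ, η y‖) :
    ∃ C₀ : ℝ, 0 < C₀ ∧ ∀ ν : ℝ, 0 < ν → ν < 1 → ∀ x : ℝ, x ∈ Set.Ioo (1 / 4 : ℝ) 1 →
      C₀ ≤ ⨆ t : Set.Ioo (0 : ℝ) 1,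
        ‖schrod1 (fun y : ℝ => η (y / ν) * Complex.exp (Complex.I * ((2 * y / ν ^ 2 : ℝ) : ℂ))) t.1 x‖ := by
  set J := ∫ y : ℝ, ‖η y‖ * y ^ 2
  have hJ : 0 ≤ J := integral_nonneg fun y => by positivity
  refine ⟨(‖∫ y : ℝ, η y‖ - 4 * J) / √π, div_pos (by linarith) (by positivity), ?_⟩
  rintro ν hν hν1 x ⟨hx1, hx2⟩
  have hx0 : 0 < x := by linarith
  have hxJ : x⁻¹ * J ≤ 4 * J := by
    gcongr
    rw [inv_le_comm₀ hx0 (by norm_num)]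
    linarith
  have ht : ν ^ 2 * x / 4 ∈ Set.Ioo (0 : ℝ) 1 := ⟨by positivity, by nlinarith⟩
  calc (‖∫ y : ℝ, η y‖ - 4 * J) / √π
      ≤ (‖∫ y : ℝ, η y‖ - (4 * (x / 4))⁻¹ * J) / √(4 * π * (x / 4)) := by
        rw [show 4 * (x / 4) = x by ring, show 4 * π * (x / 4) = π * x by ring]
        refine div_le_div₀ (by linarith) (by linarith) (by positivity) (Real.sqrt_le_sqrt ?_)
        nlinarith [pi_pos]
    _ ≤ ‖schrod1 η (x / 4) 0‖ := norm_schrod1_apply_zero_ge η (by positivity)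
    _ = _ := (norm_schrod1_dilate_mul_exp_at_focus η hν x).symm
    _ ≤ _ := norm_schrod1_le_maxFn1 _ ht x
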